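/- Let F have characteristic 0, fix 1 ≤ n₁ < n₂ ≤ n, and let Δ̃ = Σ_{i=1}^{n₁} x_i∂_{y_i} − Σ_{r=n₁+1}^{n₂} ∂_{x_r}∂_{y_r} + Σ_{s=n₂+1}^{n} y_s∂_{x_s} act on A = F[x₁,...,xₙ,y₁,...,yₙ]. Define the linear operator T on monomials by T(x^α y^β) = Σ_{i≥0} [ (x_{n₁+1} y_{n₁+1})^i (Δ̃ + ∂_{x_{n₁+1}}∂_{y_{n₁+1}})^i (x^α y^β) ] / [ Π_{r=1}^{i} (α_{n₁+1}+r)(β_{n₁+1}+r) ]. Then for every monomial x^α y^β with α_{n₁+1}·β_{n₁+1} = 0, we have Δ̃(T(x^α y^β)) = 0; i.e., T(x^α y^β) is a harmonic polynomial for Δ̃. -/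

import Mathlib

/-!
Put `p = n₁ + 1`, `E = ∂_{x_p} ∂_{y_p}`, `m = x_p y_p` and `P = Δ̃ + E`. The operator `P` involves
neither `x_p` nor `y_p`, so it commutes with multiplication by `m`, with `E` and with the Euler
operators `x_p ∂_{x_p}`, `y_p ∂_{y_p}`. Since `α_p β_p = 0`, the monomial `v = x^α y^β` is killed by
`E` and is an eigenvector of these Euler operators with eigenvalues `α_p`, `β_p`; hence so is every
`P^i v`. For such a vector `w` a direct computation gives
`E (m^{i+1} w) = (i+1)(α_p+β_p+i+1) m^i w = (α_p+i+1)(β_p+i+1) m^i w`, so with the chosen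
coefficients `Δ̃ = P - E` turns the defining sum of `T(v)` into a telescoping one. Its top term
vanishes because every term of `P` lowers a suitable weight by `2`, so `P^{N+1} v = 0` for `N` the
total degree of `v`.
-/

open MvPolynomial

namespace Stmt5

variable (F : Type*) [Field F] [CharZero F] (n n₁ n₂ : ℕ)

abbrev A := MvPolynomial (Fin n ⊕ Fin n) F

noncomputable def xv (i : Fin n) : A F n := X (Sum.inl i)
noncomputable def yv (i : Fin n) : A F n := X (Sum.inr i)
noncomputable def mul (f : A F n) : Module.End F (A F n) := LinearMap.mulLeft F f
noncomputable def pdx (i : Fin n) : Module.End F (A F n) :=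
  (pderiv (Sum.inl i : Fin n ⊕ Fin n)).toLinearMap
noncomputable def pdy (i : Fin n) : Module.End F (A F n) :=
  (pderiv (Sum.inr i : Fin n ⊕ Fin n)).toLinearMap

/-- The twisted Laplace operator
`Δ̃ = Σ_{i=1}^{n₁} x_i∂_{y_i} − Σ_{r=n₁+1}^{n₂} ∂_{x_r}∂_{y_r} + Σ_{s=n₂+1}^{n} y_s∂_{x_s}`
(indices 0-based). -/
noncomputable def lap : Module.End F (A F n) :=
  (∑ i ∈ Finset.univ.filter (fun i : Fin n => (i : ℕ) < n₁),
      mul F n (xv F n i) * pdy F n i)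
  - (∑ r ∈ Finset.univ.filter (fun r : Fin n => n₁ ≤ (r : ℕ) ∧ (r : ℕ) < n₂),
      pdx F n r * pdy F n r)
  + ∑ s ∈ Finset.univ.filter (fun s : Fin n => n₂ ≤ (s : ℕ)),
      mul F n (yv F n s) * pdx F n s

end Stmt5

namespace MvPolynomial

variable {σ R : Type*} [CommRing R]

theorem pderiv_pderiv_comm (u t : σ) (f : MvPolynomial σ R) :
    pderiv u (pderiv t f) = pderiv t (pderiv u f) := by
  classical
  have h : ⁅pderiv u, pderiv t⁆ = (0 : Derivation R (MvPolynomial σ R) (MvPolynomial σ R)) :=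
    derivation_ext fun i => by
      rw [Derivation.commutator_apply, pderiv_X, pderiv_X, Derivation.zero_apply]
      simp only [Pi.single_apply]
      split_ifs <;> simp
  simpa [Derivation.commutator_apply, sub_eq_zero] using congr($h f)

theorem commute_pderiv_pderiv (u t : σ) :
    Commute (pderiv u : Derivation R (MvPolynomial σ R) (MvPolynomial σ R)).toLinearMap
      (pderiv t).toLinearMap :=
  LinearMap.ext (pderiv_pderiv_comm u t)

theorem commute_mulLeft_X_pderiv {a q : σ} (h : a ≠ q) :
    Commute (LinearMap.mulLeft R (X a : MvPolynomial σ R)) (pderiv q).toLinearMap :=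
  LinearMap.ext fun f => by simp [pderiv_X_of_ne h]

def weylGenerators (T : Set σ) : Set (Module.End R (MvPolynomial σ R)) :=
  {O | ∃ q ∈ T, O = LinearMap.mulLeft R (X q) ∨ O = (pderiv q).toLinearMap}

theorem mulLeft_X_mem_centralizer_weylGenerators {T : Set σ} {a : σ} (ha : a ∉ T) :
    LinearMap.mulLeft R (X a) ∈ Subalgebra.centralizer R (weylGenerators (R := R) T) := by
  refine (Subalgebra.mem_centralizer_iff R).2 ?_
  rintro _ ⟨q, hq, rfl | rfl⟩
  · exact LinearMap.ext fun f => by simp [mul_left_comm]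
  · exact (commute_mulLeft_X_pderiv (ne_of_mem_of_not_mem hq ha).symm).eq.symm

theorem pderiv_mem_centralizer_weylGenerators {T : Set σ} {a : σ} (ha : a ∉ T) :
    (pderiv a).toLinearMap ∈ Subalgebra.centralizer R (weylGenerators (R := R) T) := by
  refine (Subalgebra.mem_centralizer_iff R).2 ?_
  rintro _ ⟨q, hq, rfl | rfl⟩
  · exact (commute_mulLeft_X_pderiv (ne_of_mem_of_not_mem hq ha)).eq
  · exact (commute_pderiv_pderiv _ _).eq

theorem pderiv_pderiv_monomial_eq_zero {u t : σ} {s : σ →₀ ℕ} (c : R) (h : s u * s t = 0) :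
    pderiv u (pderiv t (monomial s c)) = 0 := by
  rcases Nat.mul_eq_zero.1 h with hu | ht
  · rw [pderiv_pderiv_comm, pderiv_monomial (i := u), hu, Nat.cast_zero, mul_zero, monomial_zero,
      map_zero]
  · rw [pderiv_monomial (i := t), ht, Nat.cast_zero, mul_zero, monomial_zero, map_zero]

theorem pderiv_pderiv_X_mul_X_pow_succ_mul {u t : σ} (hut : u ≠ t) (i : ℕ)
    (f : MvPolynomial σ R) :
    pderiv u (pderiv t ((X u * X t) ^ (i + 1) * f)) =
      (X u * X t) ^ (i + 1) * pderiv u (pderiv t f)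
        + ((i : MvPolynomial σ R) + 1) * (X u * X t) ^ i * (X u * pderiv u f + X t * pderiv t f)
        + ((i : MvPolynomial σ R) + 1) ^ 2 * (X u * X t) ^ i * f := by
  have hdt (g : MvPolynomial σ R) :
      pderiv t (X u * X t * g) = X u * g + X u * X t * pderiv t g := by
    rw [pderiv_mul, pderiv_mul, pderiv_X_self, pderiv_X_of_ne hut]
    ring
  have hdu (g : MvPolynomial σ R) :
      pderiv u (X u * X t * g) = X t * g + X u * X t * pderiv u g := by
    rw [pderiv_mul, pderiv_mul, pderiv_X_self, pderiv_X_of_ne hut.symm]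
    ring
  induction i generalizing f with
  | zero =>
    rw [zero_add, pow_one, hdt, map_add, pderiv_mul, pderiv_X_self, hdu]
    simp only [Nat.cast_zero, zero_add, pow_zero]
    ring
  | succ i ih =>
    rw [pow_succ, mul_assoc, ih, hdt, hdu, map_add, hdu, pderiv_mul, pderiv_X_self]
    push_cast
    ring

theorem pderiv_pderiv_X_mul_X_pow_succ_mul_of_eigen {u t : σ} (hut : u ≠ t)
    {f : MvPolynomial σ R} {a b : R} (h₀ : pderiv u (pderiv t f) = 0)
    (ha : X u * pderiv u f = a • f) (hb : X t * pderiv t f = b • f) (i : ℕ) :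
    pderiv u (pderiv t ((X u * X t) ^ (i + 1) * f)) =
      ((i + 1) * (a + b + (i + 1))) • ((X u * X t) ^ i * f) := by
  rw [pderiv_pderiv_X_mul_X_pow_succ_mul hut, h₀, ha, hb]
  simp only [smul_eq_C_mul, map_mul, map_add, map_natCast, map_one]
  ring

section WeightLowering

variable (R) in
def weightLowering (w : σ → ℤ) (δ : ℤ) : Submodule R (Module.End R (MvPolynomial σ R)) where
  carrier := {P | ∀ ⦃p d⦄, IsWeightedHomogeneous w p d → IsWeightedHomogeneous w (P p) (d - δ)}
  zero_mem' _ _ _ := isWeightedHomogeneous_zero R w _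
  add_mem' hP hQ _ _ hp := (hP hp).add (hQ hp)
  smul_mem' c _ hP _ _ hp := (weightedHomogeneousSubmodule R w _).smul_mem c (hP hp)

variable {w : σ → ℤ}

theorem mul_mem_weightLowering {P Q : Module.End R (MvPolynomial σ R)} {δ₁ δ₂ δ : ℤ}
    (hP : P ∈ weightLowering R w δ₁) (hQ : Q ∈ weightLowering R w δ₂) (hδ : δ₁ + δ₂ = δ) :
    P * Q ∈ weightLowering R w δ := by
  intro p d hp
  have := hP (hQ hp)
  rwa [sub_sub, add_comm δ₂, hδ] at this

theorem mulLeft_X_mem_weightLowering (a : σ) :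
    LinearMap.mulLeft R (X a) ∈ weightLowering R w (-w a) := by
  intro p d hp
  simpa [add_comm] using (isWeightedHomogeneous_X R w a).mul hp

theorem pderiv_mem_weightLowering (a : σ) :
    (pderiv a).toLinearMap ∈ weightLowering R w (w a) :=
  fun _ _ hp => hp.pderiv (sub_add_cancel _ _)

theorem IsWeightedHomogeneous.eq_zero_of_neg (hw : ∀ i, 0 ≤ w i) {p : MvPolynomial σ R} {d : ℤ}
    (hp : IsWeightedHomogeneous w p d) (hd : d < 0) : p = 0 :=
  hp.eq_zero_of_no_monomials fun s hs => by
    have : 0 ≤ Finsupp.weight w s :=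
      Finset.sum_nonneg fun i _ => smul_nonneg (Nat.zero_le _) (hw i)
    omega

theorem pow_apply_eq_zero_of_mem_weightLowering (hw : ∀ i, 0 ≤ w i)
    {P : Module.End R (MvPolynomial σ R)} {δ : ℤ} (hP : P ∈ weightLowering R w δ)
    {p : MvPolynomial σ R} {d : ℤ} (hp : IsWeightedHomogeneous w p d) {k : ℕ} (hk : d < k * δ) :
    (P ^ k) p = 0 := by
  have hPk (k : ℕ) : IsWeightedHomogeneous w ((P ^ k) p) (d - k * δ) := by
    induction k with
    | zero => simpa using hp
    | succ k ih =>
      rw [pow_succ', Module.End.mul_apply]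
      convert hP ih using 1
      push_cast
      ring
  exact (hPk k).eq_zero_of_neg hw (by linarith)

end WeightLowering

end MvPolynomial

theorem Finsupp.weight_le_mul_degree {σ : Type*} {w : σ → ℤ} {c : ℤ} (hw : ∀ i, w i ≤ c)
    (s : σ →₀ ℕ) : Finsupp.weight w s ≤ c * s.degree := by
  rw [Finsupp.weight_apply, Finsupp.sum, Finsupp.degree_apply, Nat.cast_sum, Finset.mul_sum]
  refine Finset.sum_le_sum fun i _ => ?_
  rw [nsmul_eq_mul, mul_comm c]
  exact mul_le_mul_of_nonneg_left (hw i) (Nat.cast_nonneg _)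

theorem Commute.apply_pow_apply_eq_smul {K M : Type*} [CommSemiring K] [AddCommMonoid M]
    [Module K M] {P O : Module.End K M} (h : Commute P O) {v : M} {c : K} (hv : O v = c • v)
    (i : ℕ) : O ((P ^ i) v) = c • (P ^ i) v := by
  rw [← Module.End.mul_apply, ← (h.pow_left i).eq, Module.End.mul_apply, hv, map_smul]

/-- The `P`-part of the `i`-th term cancels the `e`-part of the `(i+1)`-st. -/
theorem sub_apply_sum_smul_pow_mul_pow_apply_eq_zero {K A : Type*} [CommRing K] [Ring A]
    [Algebra K A] {P e : Module.End K A} {m v : A} {c k : ℕ → K} {N : ℕ}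
    (hPm : ∀ f, P (m * f) = m * P f) (hv : e v = 0) (hN : (P ^ (N + 1)) v = 0)
    (he : ∀ i, e (m ^ (i + 1) * (P ^ (i + 1)) v) = k i • (m ^ i * (P ^ (i + 1)) v))
    (hc : ∀ i, c (i + 1) * k i = c i) :
    (P - e) (∑ i ∈ Finset.range (N + 1), c i • (m ^ i * (P ^ i) v)) = 0 := by
  have hPm_pow (i : ℕ) (f : A) : P (m ^ i * f) = m ^ i * P f := by
    induction i generalizing f with
    | zero => simp
    | succ i ih => rw [pow_succ, mul_assoc, ih, hPm, mul_assoc]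
  have hP_sum : ∑ i ∈ Finset.range (N + 1), P (c i • (m ^ i * (P ^ i) v))
      = ∑ i ∈ Finset.range N, c i • (m ^ i * (P ^ (i + 1)) v) := by
    rw [Finset.sum_range_succ, map_smul, hPm_pow, ← Module.End.mul_apply, ← pow_succ', hN]
    simp only [mul_zero, smul_zero, add_zero]
    refine Finset.sum_congr rfl fun i _ => ?_
    rw [map_smul, hPm_pow, ← Module.End.mul_apply, ← pow_succ']
  have he_sum : ∑ i ∈ Finset.range (N + 1), e (c i • (m ^ i * (P ^ i) v))
      = ∑ i ∈ Finset.range N, c i • (m ^ i * (P ^ (i + 1)) v) := by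
    rw [Finset.sum_range_succ']
    simp only [map_smul, he, smul_smul, hc, pow_zero, one_mul, Module.End.one_apply, hv,
      smul_zero, add_zero]
  rw [LinearMap.sub_apply, map_sum, map_sum, hP_sum, he_sum, sub_self]

theorem inv_cast_prod_range_succ_mul {K : Type*} [Field K] [CharZero K] {a b : ℕ}
    (hab : a * b = 0) (i : ℕ) :
    ((∏ r ∈ Finset.range (i + 1), ((a + r + 1) * (b + r + 1)) : ℕ) : K)⁻¹ *
        ((i + 1) * (a + b + (i + 1))) =
      ((∏ r ∈ Finset.range i, ((a + r + 1) * (b + r + 1)) : ℕ) : K)⁻¹ := by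
  have hk : ((i : K) + 1) * (a + b + (i + 1)) = (((a + i + 1) * (b + i + 1) : ℕ) : K) := by
    have : ((a * b : ℕ) : K) = 0 := by rw [hab, Nat.cast_zero]
    push_cast at this ⊢
    linear_combination -this
  have hk0 : (((a + i + 1) * (b + i + 1) : ℕ) : K) ≠ 0 := Nat.cast_ne_zero.2 (by positivity)
  rw [hk, Finset.prod_range_succ, Nat.cast_mul, mul_inv, mul_assoc, inv_mul_cancel₀ hk0, mul_one]

namespace Stmt5

section

variable (F : Type*) [Field F] (n n₁ n₂ : ℕ)

/-- Every term of `lap` lowers this weight by exactly `2`. -/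
def lapWeight : Fin n ⊕ Fin n → ℤ :=
  Sum.elim (fun i => if (i : ℕ) < n₁ then 0 else if (i : ℕ) < n₂ then 1 else 2)
    (fun i => if (i : ℕ) < n₁ then 2 else if (i : ℕ) < n₂ then 1 else 0)

theorem lapWeight_nonneg (a : Fin n ⊕ Fin n) : 0 ≤ lapWeight n n₁ n₂ a := by
  rcases a with i | i <;> simp only [lapWeight, Sum.elim_inl, Sum.elim_inr] <;> split_ifs <;>
    norm_num

theorem lapWeight_le_two (a : Fin n ⊕ Fin n) : lapWeight n n₁ n₂ a ≤ 2 := by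
  rcases a with i | i <;> simp only [lapWeight, Sum.elim_inl, Sum.elim_inr] <;> split_ifs <;>
    norm_num

theorem pdx_mul_pdy_mem_weightLowering {i : Fin n} (h₁ : n₁ ≤ i) (h₂ : (i : ℕ) < n₂) :
    pdx F n i * pdy F n i ∈ weightLowering F (lapWeight n n₁ n₂) 2 :=
  mul_mem_weightLowering (pderiv_mem_weightLowering _) (pderiv_mem_weightLowering _) <| by
    simp [lapWeight, h₂, not_lt.2 h₁]

theorem lap_mem_weightLowering (h : n₁ ≤ n₂) :
    lap F n n₁ n₂ ∈ weightLowering F (lapWeight n n₁ n₂) 2 := by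
  refine add_mem (sub_mem (Submodule.sum_mem _ fun i hi => ?_)
    (Submodule.sum_mem _ fun r hr => ?_)) (Submodule.sum_mem _ fun s hs => ?_)
  · simp only [Finset.mem_filter, Finset.mem_univ, true_and] at hi
    exact mul_mem_weightLowering (mulLeft_X_mem_weightLowering _) (pderiv_mem_weightLowering _)
      (by simp [lapWeight, hi])
  · simp only [Finset.mem_filter, Finset.mem_univ, true_and] at hr
    exact pdx_mul_pdy_mem_weightLowering F n n₁ n₂ hr.1 hr.2
  · simp only [Finset.mem_filter, Finset.mem_univ, true_and] at hs
    exact mul_mem_weightLowering (mulLeft_X_mem_weightLowering _) (pderiv_mem_weightLowering _)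
      (by simp [lapWeight, not_lt.2 hs, not_lt.2 (h.trans hs)])

noncomputable def lapErase (p : Fin n) : Module.End F (A F n) :=
  (∑ i ∈ Finset.univ.filter (fun i : Fin n => (i : ℕ) < n₁),
      mul F n (xv F n i) * pdy F n i)
  - (∑ r ∈ (Finset.univ.filter (fun r : Fin n => n₁ ≤ (r : ℕ) ∧ (r : ℕ) < n₂)).erase p,
      pdx F n r * pdy F n r)
  + ∑ s ∈ Finset.univ.filter (fun s : Fin n => n₂ ≤ (s : ℕ)),
      mul F n (yv F n s) * pdx F n s

theorem lap_add_pdx_mul_pdy {p : Fin n} (hp₁ : n₁ ≤ p) (hp₂ : (p : ℕ) < n₂) :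
    lap F n n₁ n₂ + pdx F n p * pdy F n p = lapErase F n n₁ n₂ p := by
  have hp : p ∈ Finset.univ.filter (fun r : Fin n => n₁ ≤ (r : ℕ) ∧ (r : ℕ) < n₂) := by
    simp [hp₁, hp₂]
  rw [lap, lapErase, ← Finset.add_sum_erase _ _ hp]
  abel

theorem lapErase_mem_centralizer {p : Fin n} (hp₁ : n₁ ≤ p) (hp₂ : (p : ℕ) < n₂) :
    lapErase F n n₁ n₂ p ∈
      Subalgebra.centralizer F (weylGenerators {Sum.inl p, Sum.inr p}) := by
  have hx {a : Fin n} (ha : a ≠ p) : mul F n (xv F n a) ∈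
      Subalgebra.centralizer F (weylGenerators {Sum.inl p, Sum.inr p}) :=
    mulLeft_X_mem_centralizer_weylGenerators (by simp [ha])
  have hy {a : Fin n} (ha : a ≠ p) : mul F n (yv F n a) ∈
      Subalgebra.centralizer F (weylGenerators {Sum.inl p, Sum.inr p}) :=
    mulLeft_X_mem_centralizer_weylGenerators (by simp [ha])
  have hdx {a : Fin n} (ha : a ≠ p) : pdx F n a ∈
      Subalgebra.centralizer F (weylGenerators {Sum.inl p, Sum.inr p}) :=
    pderiv_mem_centralizer_weylGenerators (by simp [ha])
  have hdy {a : Fin n} (ha : a ≠ p) : pdy F n a ∈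
      Subalgebra.centralizer F (weylGenerators {Sum.inl p, Sum.inr p}) :=
    pderiv_mem_centralizer_weylGenerators (by simp [ha])
  have hne {a : Fin n} (ha : (a : ℕ) ≠ p) : a ≠ p := fun h => ha (congrArg Fin.val h)
  refine add_mem (sub_mem (Subalgebra.sum_mem _ fun i hi => ?_)
    (Subalgebra.sum_mem _ fun r hr => ?_)) (Subalgebra.sum_mem _ fun s hs => ?_)
  · simp only [Finset.mem_filter, Finset.mem_univ, true_and] at hi
    exact Subalgebra.mul_mem _ (hx (hne (by omega))) (hdy (hne (by omega)))
  · have hrp := Finset.ne_of_mem_erase hr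
    exact Subalgebra.mul_mem _ (hdx hrp) (hdy hrp)
  · simp only [Finset.mem_filter, Finset.mem_univ, true_and] at hs
    exact Subalgebra.mul_mem _ (hy (hne (by omega))) (hdx (hne (by omega)))

theorem commute_lap_add_pdx_mul_pdy {p : Fin n} (hp₁ : n₁ ≤ p) (hp₂ : (p : ℕ) < n₂) :
    ∀ O ∈ weylGenerators {Sum.inl p, Sum.inr p},
      Commute (lap F n n₁ n₂ + pdx F n p * pdy F n p) O := fun O hO =>
  ((Subalgebra.mem_centralizer_iff F).1 (lap_add_pdx_mul_pdy F n n₁ n₂ hp₁ hp₂ ▸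
    lapErase_mem_centralizer F n n₁ n₂ hp₁ hp₂) O hO).symm

theorem lap_add_pdx_mul_pdy_pow_apply_monomial {p : Fin n} (hp₁ : n₁ ≤ p) (hp₂ : (p : ℕ) < n₂)
    (s : Fin n ⊕ Fin n →₀ ℕ) (c : F) :
    ((lap F n n₁ n₂ + pdx F n p * pdy F n p) ^ (s.degree + 1)) (monomial s c) = 0 := by
  refine pow_apply_eq_zero_of_mem_weightLowering (lapWeight_nonneg n n₁ n₂)
    (add_mem (lap_mem_weightLowering F n n₁ n₂ (hp₁.trans hp₂.le))
      (pdx_mul_pdy_mem_weightLowering F n n₁ n₂ hp₁ hp₂))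
    (isWeightedHomogeneous_monomial _ _ _ rfl) ?_
  have := Finsupp.weight_le_mul_degree (lapWeight_le_two n n₁ n₂) s
  push_cast
  linarith

theorem prod_xv_pow_mul_prod_yv_pow (α β : Fin n → ℕ) :
    (∏ j, xv F n j ^ α j) * ∏ j, yv F n j ^ β j
      = monomial (Finsupp.equivFunOnFinite.symm (Sum.elim α β)) 1 := by
  set s : Fin n ⊕ Fin n →₀ ℕ := Finsupp.equivFunOnFinite.symm (Sum.elim α β)
  rw [← prod_X_pow_eq_monomial, Finset.prod_subset (Finset.subset_univ s.support) fun a _ ha => by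
    rw [Finsupp.notMem_support_iff.1 ha, pow_zero], Fintype.prod_sum_type]
  rfl

end

variable (F : Type*) [Field F] [CharZero F] (n n₁ n₂ : ℕ)

theorem lap_T_monomial_eq_zero
    (h₁₂ : n₁ < n₂) (hn : n₁ < n)
    (α β : Fin n → ℕ) (hαβ : α ⟨n₁, hn⟩ * β ⟨n₁, hn⟩ = 0) :
    lap F n n₁ n₂
      (∑ i ∈ Finset.range ((∑ j, α j) + (∑ j, β j) + 1),
        ((∏ r ∈ Finset.range i,
            ((α ⟨n₁, hn⟩ + r + 1) * (β ⟨n₁, hn⟩ + r + 1)) : ℕ) : F)⁻¹ •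
          ((xv F n ⟨n₁, hn⟩ * yv F n ⟨n₁, hn⟩) ^ i *
            (((lap F n n₁ n₂ + pdx F n ⟨n₁, hn⟩ * pdy F n ⟨n₁, hn⟩) ^ i)
              ((∏ j, xv F n j ^ α j) * ∏ j, yv F n j ^ β j)))) = 0 := by
  set p : Fin n := ⟨n₁, hn⟩
  set P := lap F n n₁ n₂ + pdx F n p * pdy F n p
  set s : Fin n ⊕ Fin n →₀ ℕ := Finsupp.equivFunOnFinite.symm (Sum.elim α β)
  have hP := commute_lap_add_pdx_mul_pdy F n n₁ n₂ (p := p) le_rfl h₁₂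
  have hPx := hP (mul F n (xv F n p)) ⟨Sum.inl p, by simp, Or.inl rfl⟩
  have hPy := hP (mul F n (yv F n p)) ⟨Sum.inr p, by simp, Or.inl rfl⟩
  have hPdx := hP (pdx F n p) ⟨Sum.inl p, by simp, Or.inr rfl⟩
  have hPdy := hP (pdy F n p) ⟨Sum.inr p, by simp, Or.inr rfl⟩
  have hv : (pdx F n p * pdy F n p) (monomial s 1) = 0 := pderiv_pderiv_monomial_eq_zero _ hαβ
  have hdeg : s.degree = (∑ j, α j) + ∑ j, β j := by
    rw [Finsupp.degree_eq_sum, Fintype.sum_sum_type]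
    rfl
  rw [prod_xv_pow_mul_prod_yv_pow, show lap F n n₁ n₂ = P - pdx F n p * pdy F n p from
    (add_sub_cancel_right _ _).symm, ← hdeg]
  refine sub_apply_sum_smul_pow_mul_pow_apply_eq_zero
    (k := fun i => ((i : F) + 1) * (α p + β p + (i + 1))) (fun f => ?_) hv
    (lap_add_pdx_mul_pdy_pow_apply_monomial F n n₁ n₂ le_rfl h₁₂ s 1) (fun i => ?_)
    (inv_cast_prod_range_succ_mul hαβ)
  · rw [mul_assoc, mul_assoc]
    exact LinearMap.congr_fun (hPx.mul_right hPy).eq f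
  · refine pderiv_pderiv_X_mul_X_pow_succ_mul_of_eigen (by simp) ?_ ?_ ?_ i
    · have := (hPdx.mul_right hPdy).apply_pow_apply_eq_smul (c := 0)
        (by rw [zero_smul]; exact hv) (i + 1)
      rwa [zero_smul] at this
    · exact (hPx.mul_right hPdx).apply_pow_apply_eq_smul
        (X_mul_pderiv_monomial.trans (Nat.cast_smul_eq_nsmul F _ _).symm) (i + 1)
    · exact (hPy.mul_right hPdy).apply_pow_apply_eq_smul
        (X_mul_pderiv_monomial.trans (Nat.cast_smul_eq_nsmul F _ _).symm) (i + 1)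

end Stmt5
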